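/- arXiv:2205.01808 — 2 statements merged into one kernel-verified Lean document; each statement's English description precedes it below -/
import Mathlib

section
/- Assume λ < 0 and μ > 0. Let v₁ ≠ 0 in ℝ², let w₂ = t v₁ with 0 < t < 1, let w₁ ∈ C_A(v₁, 0) with w₁ ≠ w₂, and let σ ∈ [0, π] satisfy w₁ − w₂ = (|w₁ − w₂|/|v₁|) R_σ v₁. Then φ_A((π − σ)/μ, w₁, w₂) = (1 − e^{λ(π − σ)/μ} |w₁ − w₂|/|w₂|) w₂, and this point lies on the closed segment joining e^{(π/μ)A} v₁ = −e^{πλ/μ} v₁ and v₁. -/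
noncomputable section

open Real Set RealInnerProductSpace

/-- The Euclidean plane. -/
abbrev E2 : Type := EuclideanSpace ℝ (Fin 2)

/-- The vector `(a, b)` in the Euclidean plane. -/
def vec2 (a b : ℝ) : E2 := !₂[a, b]

/-- Counterclockwise rotation of angle `φ`. -/
def rotMap (φ : ℝ) (v : E2) : E2 :=
  vec2 (Real.cos φ * v 0 - Real.sin φ * v 1) (Real.sin φ * v 0 + Real.cos φ * v 1)

/-- `θ`, the counterclockwise rotation by `π/2`. -/
def thetaMap (v : E2) : E2 := vec2 (-(v 1)) (v 0)

/-- The linear map with matrix `A = ((l, -m), (m, l))`. -/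
def Amap (l m : ℝ) (v : E2) : E2 := vec2 (l * v 0 - m * v 1) (m * v 0 + l * v 1)

/-- The inverse `A⁻¹` of the matrix `A = ((l, -m), (m, l))` (with `det A = l² + m² ≠ 0`). -/
def AinvMap (l m : ℝ) (v : E2) : E2 :=
  (1 / (l ^ 2 + m ^ 2)) • vec2 (l * v 0 + m * v 1) (-m * v 0 + l * v 1)

/-- The matrix exponential `e^{τA} = e^{τl} R_{τm}` for `A = ((l, -m), (m, l))`. -/
def expA (l m τ : ℝ) (v : E2) : E2 := Real.exp (τ * l) • rotMap (τ * m) v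

/-- The equilibrium `v(u) = -u A⁻¹ η`. -/
def equil (l m : ℝ) (η : E2) (u : ℝ) : E2 := (-u) • AinvMap l m η

/-- The solution `φ(s, v, u) = e^{sA}(v - v(u)) + v(u)` of `ẋ = Ax + uη` for constant control. -/
def phi (l m : ℝ) (η : E2) (s : ℝ) (v : E2) (u : ℝ) : E2 :=
  expA l m s (v - equil l m η u) + equil l m η u

/-- The spiral `φ_A(τ, v₁, v₂) = e^{τA}(v₁ - v₂) + v₂`. -/
def phiA (l m : ℝ) (τ : ℝ) (v₁ v₂ : E2) : E2 := expA l m τ (v₁ - v₂) + v₂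

/-- The region `C_A(v₁, v₂)`. -/
def CA (l m : ℝ) (v₁ v₂ : E2) : Set E2 :=
  {v | 0 ≤ ⟪v - v₂, thetaMap (v₁ - v₂)⟫ ∧
    ∀ τ ∈ Icc (0 : ℝ) (π / m),
      0 ≤ ⟪v - phiA l m τ v₁ v₂, thetaMap (Amap l m (expA l m τ (v₁ - v₂)))⟫}

/-- Concatenated solution associated to a finite list of (time, control) pairs. -/
def trajComp (l m : ℝ) (η : E2) : E2 → List (ℝ × ℝ) → E2
  | v, [] => v
  | v, p :: rest => trajComp l m η (phi l m η p.1 v p.2) rest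

/-- The forward reachable set `R⁺(v)`. -/
def ReachPlus (l m : ℝ) (η : E2) (Ω : Set ℝ) (v : E2) : Set E2 :=
  {w | ∃ L : List (ℝ × ℝ), (∀ p ∈ L, 0 ≤ p.1 ∧ p.2 ∈ Ω) ∧ w = trajComp l m η v L}

/-- The backward reachable set `R⁻(v)` (forward reachable set of the time-reversed system). -/
def ReachMinus (l m : ℝ) (η : E2) (Ω : Set ℝ) (v : E2) : Set E2 :=
  {w | ∃ L : List (ℝ × ℝ), (∀ p ∈ L, p.1 ≤ 0 ∧ p.2 ∈ Ω) ∧ w = trajComp l m η v L}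

/-- An admissible trajectory of the system starting at `v`. -/
def IsAdmissibleTraj (l m : ℝ) (η : E2) (Ω : Set ℝ) (v : E2) (x : ℝ → E2) : Prop :=
  x 0 = v ∧
  ∃ t : ℕ → ℝ, t 0 = 0 ∧ StrictMono t ∧ (∀ M : ℝ, ∃ n, M < t n) ∧
    ∃ u : ℕ → ℝ, (∀ k, u k ∈ Ω) ∧
      ∀ k, ∀ s ∈ Icc (t k) (t (k + 1)), x s = phi l m η (s - t k) (x (t k)) (u k)

/-- An admissible trajectory of the time-reversed system starting at `v`. -/
def IsAdmissibleTrajRev (l m : ℝ) (η : E2) (Ω : Set ℝ) (v : E2) (x : ℝ → E2) : Prop :=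
  x 0 = v ∧
  ∃ t : ℕ → ℝ, t 0 = 0 ∧ StrictMono t ∧ (∀ M : ℝ, ∃ n, M < t n) ∧
    ∃ u : ℕ → ℝ, (∀ k, u k ∈ Ω) ∧
      ∀ k, ∀ s ∈ Icc (t k) (t (k + 1)), x s = phi l m η (-(s - t k)) (x (t k)) (u k)

/-- Conditions (a) and (b) of the definition of a control set. -/
def ControlSetAxioms (l m : ℝ) (η : E2) (Ω : Set ℝ) (D : Set E2) : Prop :=
  (∀ v ∈ D, ∃ x : ℝ → E2, IsAdmissibleTraj l m η Ω v x ∧ ∀ s : ℝ, 0 ≤ s → x s ∈ D) ∧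
  ∀ v ∈ D, D ⊆ closure (ReachPlus l m η Ω v)

/-- A control set: a set satisfying (a) and (b), maximal with respect to set inclusion. -/
def IsControlSet (l m : ℝ) (η : E2) (Ω : Set ℝ) (D : Set E2) : Prop :=
  ControlSetAxioms l m η Ω D ∧
    ∀ D' : Set E2, ControlSetAxioms l m η Ω D' → D ⊆ D' → D' = D

/-- Conditions (a) and (b) of the definition of a control set of the time-reversed system. -/
def ControlSetAxiomsRev (l m : ℝ) (η : E2) (Ω : Set ℝ) (D : Set E2) : Prop :=
  (∀ v ∈ D, ∃ x : ℝ → E2, IsAdmissibleTrajRev l m η Ω v x ∧ ∀ s : ℝ, 0 ≤ s → x s ∈ D) ∧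
  ∀ v ∈ D, D ⊆ closure (ReachMinus l m η Ω v)

/-- A control set of the time-reversed system. -/
def IsControlSetRev (l m : ℝ) (η : E2) (Ω : Set ℝ) (D : Set E2) : Prop :=
  ControlSetAxiomsRev l m η Ω D ∧
    ∀ D' : Set E2, ControlSetAxiomsRev l m η Ω D' → D ⊆ D' → D' = D

/-- `ρ = e^{πλ/μ}`. -/
def rho (l m : ℝ) : ℝ := Real.exp (π * l / m)

/-- The point `P⁺ = ((-u⁺ + ρ u⁻)/(1 - ρ)) A⁻¹ η`. -/
def Pplus (l m : ℝ) (η : E2) (um up : ℝ) : E2 :=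
  ((-up + rho l m * um) / (1 - rho l m)) • AinvMap l m η

/-- The point `P⁻ = ((-u⁻ + ρ u⁺)/(1 - ρ)) A⁻¹ η`. -/
def Pminus (l m : ℝ) (η : E2) (um up : ℝ) : E2 :=
  ((-um + rho l m * up) / (1 - rho l m)) • AinvMap l m η

/-- The region `C = C_A(P⁺, v(u⁻)) ∪ C_A(P⁻, v(u⁺))`. -/
def regionC (l m : ℝ) (η : E2) (um up : ℝ) : Set E2 :=
  CA l m (Pplus l m η um up) (equil l m η um) ∪ CA l m (Pminus l m η um up) (equil l m η up)

/-- The sequence `P₀ = v(u⁺)`, `P_{2n+1} = φ(π/μ, P_{2n}, u⁻)`, `P_{2n+2} = φ(π/μ, P_{2n+1}, u⁺)`. -/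
def Pseq (l m : ℝ) (η : E2) (um up : ℝ) : ℕ → E2
  | 0 => equil l m η up
  | n + 1 => phi l m η (π / m) (Pseq l m η um up n) (if n % 2 = 0 then um else up)

/-- The periodic orbit `O`. -/
def orbitO (l m : ℝ) (η : E2) (um up : ℝ) : Set E2 :=
  (fun s => phi l m η s (Pplus l m η um up) um) '' Icc (0 : ℝ) (π / m) ∪
    (fun s => phi l m η s (Pminus l m η um up) up) '' Icc (0 : ℝ) (π / m)


/-! Write `w₁ - w₂ = q R_σ v₁`. The spiral around `w₂` turns `R_σ v₁` into `R_π v₁ = -v₁` at time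
`(π - σ)/μ`, so it lands at `(t - e^{λ(π-σ)/μ} q) v₁`, below `v₁` because `t < 1`. It stays above
`-e^{πλ/μ} v₁` because testing `w₁ ∈ C_A(v₁, 0)` at `τ = σ/μ` gives
`μ q ≤ μ e^{σλ/μ} - t (λ sin σ + μ cos σ)`, while `λ sin σ + μ cos σ ≥ -μ e^{-λ(π-σ)/μ}` follows from
`sin σ ≤ π - σ`, `cos σ ≥ -1` and `e^x ≥ 1 + x`. -/

lemma smul_mem_segment_smul {E : Type*} [AddCommGroup E] [Module ℝ E] {a b c : ℝ}
    (hac : a ≤ c) (hcb : c ≤ b) (v : E) : c • v ∈ segment ℝ (a • v) (b • v) := by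
  rw [← LinearMap.toSpanSingleton_apply ℝ E v a, ← LinearMap.toSpanSingleton_apply ℝ E v b,
    ← LinearMap.coe_toAffineMap, ← image_segment, segment_eq_Icc (hac.trans hcb)]
  exact ⟨c, ⟨hac, hcb⟩, rfl⟩

lemma rotMap_smul (φ c : ℝ) (v : E2) : rotMap φ (c • v) = c • rotMap φ v := by
  ext i; fin_cases i <;> simp [rotMap, vec2] <;> ring

lemma rotMap_rotMap (φ ψ : ℝ) (v : E2) : rotMap φ (rotMap ψ v) = rotMap (φ + ψ) v := by
  ext i; fin_cases i <;> simp [rotMap, vec2, cos_add, sin_add] <;> ring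

lemma rotMap_pi (v : E2) : rotMap π v = -v := by
  ext i; fin_cases i <;> simp [rotMap, vec2]

lemma expA_smul_rotMap (l m τ q σ : ℝ) (v : E2) :
    expA l m τ (q • rotMap σ v) = (exp (τ * l) * q) • rotMap (τ * m + σ) v := by
  rw [expA, rotMap_smul, rotMap_rotMap, smul_smul]

lemma expA_pi_div {l m : ℝ} (hm : m ≠ 0) (v : E2) :
    expA l m (π / m) v = (-exp (π * l / m)) • v := by
  rw [expA, div_mul_cancel₀ π hm, rotMap_pi, smul_neg, neg_smul, mul_div_right_comm]

lemma phiA_eq_sub_of_sub_eq_smul_rotMap {l m q σ : ℝ} {v w₁ w₂ : E2} (hm : m ≠ 0)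
    (h : w₁ - w₂ = q • rotMap σ v) :
    phiA l m ((π - σ) / m) w₁ w₂ = w₂ - (exp (l * (π - σ) / m) * q) • v := by
  rw [phiA, h, expA_smul_rotMap, div_mul_cancel₀ _ hm, sub_add_cancel, rotMap_pi, smul_neg,
    neg_add_eq_sub, div_mul_eq_mul_div, mul_comm (π - σ) l]

lemma inner_sub_phiA_zero (l m τ t q : ℝ) (v : E2) :
    ⟪t • v + q • rotMap (τ * m) v - phiA l m τ v 0, thetaMap (Amap l m (expA l m τ (v - 0)))⟫ =
      exp (τ * l) * ‖v‖ ^ 2 *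
        (m * exp (τ * l) - m * q - t * (l * sin (τ * m) + m * cos (τ * m))) := by
  simp only [phiA, expA, thetaMap, Amap, rotMap, vec2, EuclideanSpace.norm_sq_eq,
    Real.norm_eq_abs, sq_abs, sub_zero, add_zero, PiLp.inner_apply, Fin.sum_univ_two,
    PiLp.sub_apply, PiLp.smul_apply, PiLp.add_apply, smul_eq_mul, Matrix.cons_val_zero,
    Matrix.cons_val_one, RCLike.inner_apply, conj_trivial]
  linear_combination (m * exp (τ * l) * (exp (τ * l) - q) * (v 0 ^ 2 + v 1 ^ 2)) *
    sin_sq_add_cos_sq (τ * m)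

lemma le_of_mem_CA_zero {l m t q σ : ℝ} {v : E2} (hm : 0 < m) (hv : v ≠ 0)
    (hσ : σ ∈ Icc 0 π) (hw : t • v + q • rotMap σ v ∈ CA l m v 0) :
    m * q ≤ m * exp (σ / m * l) - t * (l * sin σ + m * cos σ) := by
  have hτ : σ / m ∈ Icc 0 (π / m) :=
    ⟨div_nonneg hσ.1 hm.le, div_le_div_of_nonneg_right hσ.2 hm.le⟩
  have h := hw.2 (σ / m) hτ
  have hinner := inner_sub_phiA_zero l m (σ / m) t q v
  rw [div_mul_cancel₀ σ hm.ne'] at hinner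
  rw [hinner] at h
  have hpos : 0 < exp (σ / m * l) * ‖v‖ ^ 2 := by positivity
  linarith [nonneg_of_mul_nonneg_right h hpos]

lemma neg_le_exp_mul_sin_add_cos {l m σ : ℝ} (hl : l ≤ 0) (hm : 0 < m) (hσ : σ ≤ π) :
    -m ≤ exp (l * (π - σ) / m) * (l * sin σ + m * cos σ) := by
  set x := -(l * (π - σ)) / m
  have hx : m * x = -(l * (π - σ)) := mul_div_cancel₀ _ hm.ne'
  have hsin : sin σ ≤ π - σ := by rw [← sin_pi_sub]; exact sin_le (by linarith)
  have hcos := neg_one_le_cos σ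
  have hlin : -(l * sin σ + m * cos σ) ≤ m * exp x := by
    nlinarith [add_one_le_exp x]
  have hexp : exp (l * (π - σ) / m) * exp x = 1 := by
    rw [← exp_add, ← exp_zero]; congr 1; simp only [x]; ring
  nlinarith [exp_pos (l * (π - σ) / m)]

lemma exp_mul_le_of_mem_CA_zero {l m t q σ : ℝ} {v : E2} (hl : l ≤ 0) (hm : 0 < m)
    (hv : v ≠ 0) (hσ : σ ∈ Icc 0 π) (ht : 0 ≤ t) (hw : t • v + q • rotMap σ v ∈ CA l m v 0) :
    exp (l * (π - σ) / m) * q ≤ t + exp (π * l / m) := by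
  have hCA := le_of_mem_CA_zero hm hv hσ hw
  have hspiral := neg_le_exp_mul_sin_add_cos hl hm hσ.2
  have hρ : exp (l * (π - σ) / m) * exp (σ / m * l) = exp (π * l / m) := by
    rw [← exp_add]; congr 1; field_simp; ring
  have he := exp_pos (l * (π - σ) / m)
  have hscaled : m * (exp (l * (π - σ) / m) * q) ≤ m * (t + exp (π * l / m)) := by
    nlinarith [mul_le_mul_of_nonneg_left hCA he.le, mul_le_mul_of_nonneg_left hspiral ht]
  exact le_of_mul_le_mul_left hscaled hm

theorem stmt2_general (l m : ℝ) (hl : l < 0) (hm : 0 < m) (v₁ w₁ w₂ : E2) (hv : v₁ ≠ 0)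
    (t : ℝ) (ht0 : 0 < t) (ht1 : t < 1) (hw₂ : w₂ = t • v₁)
    (hw₁ : w₁ ∈ CA l m v₁ 0)
    (σ : ℝ) (hσ : σ ∈ Icc (0 : ℝ) π)
    (hangle : w₁ - w₂ = (‖w₁ - w₂‖ / ‖v₁‖) • rotMap σ v₁) :
    phiA l m ((π - σ) / m) w₁ w₂ =
      (1 - Real.exp (l * (π - σ) / m) * ‖w₁ - w₂‖ / ‖w₂‖) • w₂ ∧
    expA l m (π / m) v₁ = (-Real.exp (π * l / m)) • v₁ ∧
    phiA l m ((π - σ) / m) w₁ w₂ ∈ segment ℝ (expA l m (π / m) v₁) v₁ := by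
  set q := ‖w₁ - w₂‖ / ‖v₁‖
  set e := exp (l * (π - σ) / m)
  have hφ : phiA l m ((π - σ) / m) w₁ w₂ = (t - e * q) • v₁ := by
    rw [phiA_eq_sub_of_sub_eq_smul_rotMap hm.ne' hangle, hw₂, sub_smul]
  have hw₁' : t • v₁ + q • rotMap σ v₁ ∈ CA l m v₁ 0 := by
    rwa [← hw₂, ← sub_eq_iff_eq_add'.mp hangle]
  have hlower : e * q ≤ t + exp (π * l / m) :=
    exp_mul_le_of_mem_CA_zero hl.le hm hv hσ ht0.le hw₁'
  have hshift : 0 ≤ e * q := by positivity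
  refine ⟨?_, expA_pi_div hm.ne' v₁, ?_⟩
  · have hN := norm_pos_iff.mpr hv
    have hw₂N : ‖w₂‖ = t * ‖v₁‖ := by rw [hw₂, norm_smul, Real.norm_of_nonneg ht0.le]
    have hscalar : t - e * q = (1 - e * ‖w₁ - w₂‖ / ‖w₂‖) * t := by
      rw [hw₂N]; simp only [q]; field_simp
    rw [hφ, hscalar, mul_smul, ← hw₂]
  · rw [hφ, expA_pi_div hm.ne']
    simpa only [one_smul] using
      smul_mem_segment_smul (a := -exp (π * l / m)) (b := 1) (by linarith) (by linarith) v₁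

/-- `φ_A((π - σ)/μ, w₁, w₂) = (1 - e^{λ(π-σ)/μ}|w₁ - w₂|/|w₂|) w₂` lies on the
segment joining `e^{(π/μ)A} v₁ = -e^{πλ/μ} v₁` and `v₁`. -/
theorem stmt2 (l m : ℝ) (hl : l < 0) (hm : 0 < m) (v₁ w₁ w₂ : E2) (hv : v₁ ≠ 0)
    (t : ℝ) (ht0 : 0 < t) (ht1 : t < 1) (hw₂ : w₂ = t • v₁)
    (hw₁ : w₁ ∈ CA l m v₁ 0) (hw : w₁ ≠ w₂)
    (σ : ℝ) (hσ : σ ∈ Icc (0 : ℝ) π)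
    (hangle : w₁ - w₂ = (‖w₁ - w₂‖ / ‖v₁‖) • rotMap σ v₁) :
    phiA l m ((π - σ) / m) w₁ w₂ =
      (1 - Real.exp (l * (π - σ) / m) * ‖w₁ - w₂‖ / ‖w₂‖) • w₂ ∧
    expA l m (π / m) v₁ = (-Real.exp (π * l / m)) • v₁ ∧
    phiA l m ((π - σ) / m) w₁ w₂ ∈ segment ℝ (expA l m (π / m) v₁) v₁ :=
  stmt2_general l m hl hm v₁ w₁ w₂ hv t ht0 ht1 hw₂ hw₁ σ hσ hangle
end
end

section
/- Assume λ < 0 and μ > 0. Then the set C := C_A(P⁺, v(u⁻)) ∪ C_A(P⁻, v(u⁺)) is positively invariant: for every v ∈ C one has R⁺(v) ⊆ C; in particular φ(s, v, u) ∈ C for every v ∈ C, u ∈ Ω = [u⁻, u⁺], and s ≥ 0. -/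
noncomputable section

open Real Set RealInnerProductSpace

/-!
Identify the plane with `ℂ`, so that `A` is multiplication by `m (β + i)` with `β = l / m`, and use
the affine coordinate in which `v(u⁻) = 0` and `P⁺ = 1`; then `v(u⁺) = 1 - ρ` and `P⁻ = -ρ`, and
after rescaling time by `m` a constant control `u` moves points along the spiral
`ξ ↦ e^{(β+i)σ}(ξ - δ) + δ` about a centre `δ ∈ [0, 1 - ρ]`. A point lies in `C` iff both it and
its reflection `1 - ρ - ξ` lie on the inner side of every tangent to the half-turn `e^{(β+i)τ}`,
`τ ∈ [0, π]`. Along a spiral about `δ` the tangent condition at time `t` is carried back to time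
`t - σ`; when `t - σ < 0` the reflected condition at `t - σ + π` takes over. Both cases close with
`cos s + β sin s ≤ e^{βs}` on `[-π, π]`, and half-turns compose to arbitrary times.
-/

namespace LinearControl

section Trigonometric

variable (β : ℝ)

theorem hasDerivAt_exp_mul_cos_add_mul_sin (s : ℝ) :
    HasDerivAt (fun s => exp (-β * s) * (cos s + β * sin s))
      (-(1 + β ^ 2) * (exp (-β * s) * sin s)) s := by
  have hexp : HasDerivAt (fun s => exp (-β * s)) (exp (-β * s) * -β) s := by
    simpa using ((hasDerivAt_id s).const_mul (-β)).exp
  have htrig : HasDerivAt (fun s => cos s + β * sin s) (-sin s + β * cos s) s :=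
    (hasDerivAt_cos s).add ((hasDerivAt_sin s).const_mul β)
  exact (hexp.mul htrig).congr_deriv (by ring)

theorem antitoneOn_exp_mul_cos_add_mul_sin :
    AntitoneOn (fun s => exp (-β * s) * (cos s + β * sin s)) (Icc 0 π) := by
  refine antitoneOn_of_deriv_nonpos (convex_Icc 0 π) (by fun_prop) (by fun_prop) fun s hs => ?_
  rw [interior_Icc] at hs
  rw [(hasDerivAt_exp_mul_cos_add_mul_sin β s).deriv]
  have hsin := sin_nonneg_of_nonneg_of_le_pi hs.1.le hs.2.le
  have : 0 ≤ exp (-β * s) * sin s := by positivity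
  nlinarith [sq_nonneg β]

variable {β}

theorem cos_add_mul_sin_le_exp_mul_of_le {s t : ℝ} (hs : 0 ≤ s) (hst : s ≤ t) (ht : t ≤ π) :
    cos t + β * sin t ≤ exp (β * (t - s)) * (cos s + β * sin s) :=
  calc cos t + β * sin t = exp (β * t) * (exp (-β * t) * (cos t + β * sin t)) := by
        rw [← mul_assoc, ← exp_add]; simp
    _ ≤ exp (β * t) * (exp (-β * s) * (cos s + β * sin s)) :=
        mul_le_mul_of_nonneg_left (antitoneOn_exp_mul_cos_add_mul_sin β
          ⟨hs, hst.trans ht⟩ ⟨hs.trans hst, ht⟩ hst) (exp_pos _).le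
    _ = exp (β * (t - s)) * (cos s + β * sin s) := by
        rw [← mul_assoc, ← exp_add]; ring_nf

theorem cos_add_mul_sin_le_exp {s : ℝ} (hs : s ∈ Icc (-π) π) :
    cos s + β * sin s ≤ exp (β * s) := by
  rcases le_total 0 s with h | h
  · simpa using cos_add_mul_sin_le_exp_mul_of_le (β := β) le_rfl h hs.2
  · -- `cos s + β sin s` is `cos (-s) + (-β) sin (-s)`
    simpa using cos_add_mul_sin_le_exp_mul_of_le (β := -β) le_rfl (neg_nonneg.2 h)
      (neg_le.1 hs.1)

end Trigonometric

section Normalized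

/-- `e^{-βτ} ⟪ξ - e^{(β+i)τ}, θ ((β + i) e^{(β+i)τ})⟫`: it is nonnegative iff `ξ` lies on the side
of the tangent to the spiral `τ ↦ e^{(β+i)τ}` that faces the spiral's centre `0`. -/
def tangentGap (β : ℝ) (ξ : ℂ) (τ : ℝ) : ℝ :=
  (β * ξ.im - ξ.re) * cos τ - (β * ξ.re + ξ.im) * sin τ + exp (β * τ)

/-- `C_A(1, 0)` for `A = β + i` acting on `ℂ` by multiplication. -/
def halfTurnRegion (β : ℝ) : Set ℂ := {ξ | 0 ≤ ξ.im ∧ ∀ τ ∈ Icc 0 π, 0 ≤ tangentGap β ξ τ}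

def reflect (β : ℝ) (ξ : ℂ) : ℂ := ((1 - exp (β * π) : ℝ) : ℂ) - ξ

def spiralRegion (β : ℝ) : Set ℂ :=
  {ξ | ξ ∈ halfTurnRegion β ∨ reflect β ξ ∈ halfTurnRegion β}

def spiral (β δ σ : ℝ) (ξ : ℂ) : ℂ := Complex.exp ((β + Complex.I) * σ) * (ξ - δ) + δ

variable {β δ σ : ℝ} {ξ : ℂ}

@[simp] theorem reflect_re : (reflect β ξ).re = 1 - exp (β * π) - ξ.re := by
  simp only [reflect, Complex.sub_re, Complex.ofReal_re]

@[simp] theorem reflect_im : (reflect β ξ).im = -ξ.im := by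
  simp only [reflect, Complex.sub_im, Complex.ofReal_im, zero_sub]

@[simp] theorem reflect_reflect : reflect β (reflect β ξ) = ξ := by simp [reflect]

theorem reflect_mem_spiralRegion : reflect β ξ ∈ spiralRegion β ↔ ξ ∈ spiralRegion β := by
  simp only [spiralRegion, mem_ofPred_eq, reflect_reflect, or_comm]

theorem spiral_re :
    (spiral β δ σ ξ).re = exp (β * σ) * ((ξ.re - δ) * cos σ - ξ.im * sin σ) + δ := by
  simp only [spiral, Complex.add_re, Complex.mul_re, Complex.exp_re, Complex.exp_im,
    Complex.add_im, Complex.mul_im, Complex.sub_re, Complex.sub_im, Complex.ofReal_re,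
    Complex.ofReal_im, Complex.I_re, Complex.I_im, mul_zero, one_mul,
    add_zero, zero_add, sub_zero]
  ring

theorem spiral_im :
    (spiral β δ σ ξ).im = exp (β * σ) * ((ξ.re - δ) * sin σ + ξ.im * cos σ) := by
  simp only [spiral, Complex.add_re, Complex.mul_re, Complex.exp_re, Complex.exp_im,
    Complex.add_im, Complex.mul_im, Complex.sub_re, Complex.sub_im, Complex.ofReal_re,
    Complex.ofReal_im, Complex.I_re, Complex.I_im, mul_zero, one_mul,
    add_zero, zero_add, sub_zero]
  ring

theorem spiral_add (σ₁ σ₂ : ℝ) :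
    spiral β δ (σ₁ + σ₂) ξ = spiral β δ σ₂ (spiral β δ σ₁ ξ) := by
  simp only [spiral, Complex.ofReal_add, mul_add, Complex.exp_add]
  ring

theorem reflect_spiral :
    reflect β (spiral β δ σ ξ) = spiral β (1 - exp (β * π) - δ) σ (reflect β ξ) := by
  simp only [reflect, spiral, Complex.ofReal_sub]
  ring

theorem tangentGap_spiral (t : ℝ) :
    tangentGap β (spiral β δ σ ξ) t = exp (β * σ) * tangentGap β ξ (t - σ)
      + δ * (exp (β * σ) * (cos (t - σ) + β * sin (t - σ)) - (cos t + β * sin t)) := by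
  have hexp : exp (β * t) = exp (β * σ) * exp (β * (t - σ)) := by rw [← exp_add]; ring_nf
  simp only [tangentGap, spiral_re, spiral_im, cos_sub, sin_sub, hexp]
  ring

theorem tangentGap_reflect (t : ℝ) :
    tangentGap β (reflect β ξ) t = exp (β * t)
      - (1 - exp (β * π) - (ξ.re - β * ξ.im)) * (cos t + β * sin t)
      + (1 + β ^ 2) * ξ.im * sin t := by
  simp only [tangentGap, reflect_re, reflect_im]
  ring

theorem tangentGap_reflect_add_pi (s : ℝ) :
    tangentGap β (reflect β ξ) (s + π) =
      tangentGap β ξ s - (1 - exp (β * π)) * (exp (β * s) - (cos s + β * sin s)) := by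
  simp only [tangentGap, reflect_re, reflect_im, cos_add_pi, sin_add_pi, mul_add, exp_add]
  ring

theorem tangentGap_reflect_nonneg (hξ : ξ ∈ halfTurnRegion β) {t : ℝ} (ht : t ∈ Icc 0 π) :
    0 ≤ tangentGap β (reflect β ξ) t := by
  obtain ⟨him, hgap⟩ := hξ
  -- the tangents at `0` and `π` give `-e^{βπ} ≤ Re ξ - β Im ξ ≤ 1`
  have h0 := hgap 0 ⟨le_rfl, pi_pos.le⟩
  have hπ := hgap π ⟨pi_pos.le, le_rfl⟩
  simp only [tangentGap, cos_zero, sin_zero, cos_pi, sin_pi, mul_zero, exp_zero] at h0 hπ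
  have hsin : 0 ≤ (1 + β ^ 2) * ξ.im * sin t := by
    have := sin_nonneg_of_nonneg_of_le_pi ht.1 ht.2
    positivity
  rw [tangentGap_reflect]
  rcases le_total 0 (cos t + β * sin t) with hg | hg
  · have hle := cos_add_mul_sin_le_exp (β := β) ⟨by linarith [ht.1, pi_pos], ht.2⟩
    nlinarith [mul_le_mul_of_nonneg_right
      (show 1 - exp (β * π) - (ξ.re - β * ξ.im) ≤ 1 by linarith) hg]
  · -- `cos (t - π) + β sin (t - π) = -(cos t + β sin t)`
    have hle := cos_add_mul_sin_le_exp (β := β) (s := t - π)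
      ⟨by linarith [ht.1], by linarith [ht.2, pi_pos]⟩
    rw [cos_sub_pi, sin_sub_pi, mul_sub, exp_sub, le_div_iff₀ (exp_pos _)] at hle
    nlinarith [mul_le_mul_of_nonpos_right
      (show -exp (β * π) ≤ 1 - exp (β * π) - (ξ.re - β * ξ.im) by linarith) hg]

theorem mem_spiralRegion_iff :
    ξ ∈ spiralRegion β ↔
      ∀ τ ∈ Icc 0 π, 0 ≤ tangentGap β ξ τ ∧ 0 ≤ tangentGap β (reflect β ξ) τ := by
  constructor
  · rintro (hξ | hξ) τ hτ
    · exact ⟨hξ.2 τ hτ, tangentGap_reflect_nonneg hξ hτ⟩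
    · exact ⟨by simpa using tangentGap_reflect_nonneg hξ hτ, hξ.2 τ hτ⟩
  · intro h
    rcases le_total 0 ξ.im with him | him
    · exact Or.inl ⟨him, fun τ hτ => (h τ hτ).1⟩
    · exact Or.inr ⟨by simpa using him, fun τ hτ => (h τ hτ).2⟩

theorem tangentGap_spiral_nonneg (hδ : δ ∈ Icc 0 (1 - exp (β * π))) (hσ : σ ∈ Icc 0 π)
    (hξ : ξ ∈ spiralRegion β) {t : ℝ} (ht : t ∈ Icc 0 π) :
    0 ≤ tangentGap β (spiral β δ σ ξ) t := by
  rw [mem_spiralRegion_iff] at hξ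
  have hE := exp_pos (β * σ)
  rw [tangentGap_spiral]
  rcases le_total 0 (t - σ) with hs | hs
  · have hgap := (hξ (t - σ) ⟨hs, by linarith [ht.2, hσ.1]⟩).1
    have hmono := cos_add_mul_sin_le_exp_mul_of_le (β := β) hs (by linarith [hσ.1]) ht.2
    rw [sub_sub_cancel] at hmono
    nlinarith [mul_nonneg hE.le hgap, hδ.1]
  · -- use the reflected tangent condition at `t - σ + π`
    have hgap := (hξ (t - σ + π) ⟨by linarith [ht.1, hσ.2], by linarith⟩).2
    rw [tangentGap_reflect_add_pi] at hgap
    have hts : exp (β * σ) * exp (β * (t - σ)) = exp (β * t) := by rw [← exp_add]; ring_nf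
    have hs' := cos_add_mul_sin_le_exp (β := β) (s := t - σ)
      ⟨by linarith [ht.1, hσ.2], by linarith [pi_pos]⟩
    have ht' := cos_add_mul_sin_le_exp (β := β) ⟨by linarith [ht.1, pi_pos], ht.2⟩
    have hEs : exp (β * σ) * (cos (t - σ) + β * sin (t - σ)) ≤ exp (β * t) := by
      rw [← hts]; exact mul_le_mul_of_nonneg_left hs' hE.le
    have hEgap : (1 - exp (β * π)) *
          (exp (β * t) - exp (β * σ) * (cos (t - σ) + β * sin (t - σ)))
        ≤ exp (β * σ) * tangentGap β ξ (t - σ) := by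
      rw [← hts]; nlinarith [mul_le_mul_of_nonneg_left hgap hE.le]
    nlinarith [mul_nonneg (sub_nonneg.2 hδ.2) (sub_nonneg.2 hEs),
      mul_nonneg hδ.1 (sub_nonneg.2 ht')]

theorem spiral_mem_spiralRegion_of_le_pi (hδ : δ ∈ Icc 0 (1 - exp (β * π)))
    (hσ : σ ∈ Icc 0 π) (hξ : ξ ∈ spiralRegion β) : spiral β δ σ ξ ∈ spiralRegion β := by
  refine mem_spiralRegion_iff.2 fun t ht => ⟨tangentGap_spiral_nonneg hδ hσ hξ ht, ?_⟩
  rw [reflect_spiral]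
  exact tangentGap_spiral_nonneg ⟨by linarith [hδ.2], by linarith [hδ.1]⟩ hσ
    (reflect_mem_spiralRegion.2 hξ) ht

theorem spiral_mem_spiralRegion (hδ : δ ∈ Icc 0 (1 - exp (β * π))) (hσ : 0 ≤ σ)
    (hξ : ξ ∈ spiralRegion β) : spiral β δ σ ξ ∈ spiralRegion β := by
  have half_turns (n : ℕ) : ∀ ξ ∈ spiralRegion β, ∀ σ ∈ Icc 0 (n * π),
      spiral β δ σ ξ ∈ spiralRegion β := by
    induction n with
    | zero =>
      intro ξ hξ σ hσ
      have hσ0 : σ ≤ 0 := by simpa using hσ.2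
      exact spiral_mem_spiralRegion_of_le_pi hδ ⟨hσ.1, hσ0.trans pi_pos.le⟩ hξ
    | succ n ih =>
      intro ξ hξ σ hσ
      rcases le_total σ π with hle | hle
      · exact spiral_mem_spiralRegion_of_le_pi hδ ⟨hσ.1, hle⟩ hξ
      · have := ih _ (spiral_mem_spiralRegion_of_le_pi hδ ⟨pi_pos.le, le_rfl⟩ hξ) (σ - π)
          ⟨sub_nonneg.2 hle, by push_cast at hσ; linarith [hσ.2]⟩
        rwa [← spiral_add, add_sub_cancel] at this
  obtain ⟨n, hn⟩ := exists_nat_ge (σ / π)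
  exact half_turns n ξ hξ σ ⟨hσ, (div_le_iff₀ pi_pos).1 hn⟩

end Normalized

section Plane

def toC : E2 ≃ₗᵢ[ℝ] ℂ := Complex.orthonormalBasisOneI.repr.symm

@[simp] theorem toC_re (v : E2) : (toC v).re = v 0 := by
  simp [toC, Complex.orthonormalBasisOneI_repr_symm_apply]

@[simp] theorem toC_im (v : E2) : (toC v).im = v 1 := by
  simp [toC, Complex.orthonormalBasisOneI_repr_symm_apply]

theorem toC_thetaMap (v : E2) : toC (thetaMap v) = Complex.I * toC v := by
  apply Complex.ext <;> simp [thetaMap, vec2]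

theorem toC_rotMap (φ : ℝ) (v : E2) : toC (rotMap φ v) = Complex.exp (φ * Complex.I) * toC v := by
  apply Complex.ext <;>
    simp [rotMap, vec2, Complex.exp_re, Complex.exp_im, Complex.mul_re, Complex.mul_im, add_comm]

theorem inner_thetaMap (a b : E2) :
    ⟪a, thetaMap b⟫ = (toC a * (starRingEnd ℂ) (toC b)).im := by
  rw [← toC.inner_map_map, toC_thetaMap, Complex.inner]
  simp only [Complex.mul_re, Complex.mul_im, Complex.I_re, Complex.I_im, Complex.conj_re,
    Complex.conj_im]
  ring

variable (l m : ℝ)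

theorem toC_Amap (v : E2) : toC (Amap l m v) = ⟨l, m⟩ * toC v := by
  apply Complex.ext <;> simp [Amap, vec2, Complex.mul_re, Complex.mul_im, add_comm]

theorem toC_expA (τ : ℝ) (v : E2) :
    toC (expA l m τ v) = Complex.exp (⟨l, m⟩ * τ) * toC v := by
  rw [expA, map_smul, Complex.real_smul, toC_rotMap, ← mul_assoc, Complex.ofReal_exp,
    ← Complex.exp_add, Complex.mk_eq_add_mul_I]
  push_cast
  ring_nf

theorem mul_toC_AinvMap (hlm : l ^ 2 + m ^ 2 ≠ 0) (v : E2) :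
    ⟨l, m⟩ * toC (AinvMap l m v) = toC v := by
  apply Complex.ext <;>
    simp only [AinvMap, Complex.mul_re, Complex.mul_im, toC_re, toC_im, PiLp.smul_apply,
      smul_eq_mul, vec2, Matrix.cons_val_zero, Matrix.cons_val_one, Matrix.cons_val_fin_one] <;>
    field_simp <;> ring

variable {l m}

theorem im_mul_conj_eq_tangentGap (hm : m ≠ 0) (τ : ℝ) (w ξ : ℂ) :
    ((w * ξ - Complex.exp (⟨l, m⟩ * τ) * w) *
        (starRingEnd ℂ) (⟨l, m⟩ * (Complex.exp (⟨l, m⟩ * τ) * w))).im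
      = Complex.normSq w * m * exp (τ * l) * tangentGap (l / m) ξ (τ * m) := by
  have hβ : l / m * (τ * m) = τ * l := by field_simp
  simp only [tangentGap, hβ, Complex.mul_im, Complex.mul_re, Complex.sub_re, Complex.sub_im,
    Complex.conj_re, Complex.conj_im, Complex.exp_re, Complex.exp_im, Complex.normSq_apply,
    Complex.ofReal_re, Complex.ofReal_im, mul_zero, sub_zero, zero_add, mul_comm l τ]
  field_simp
  linear_combination (w.re * w.re + w.im * w.im) * m * exp (τ * l) * sin_sq_add_cos_sq (τ * m)

theorem mem_CA_iff (hm : 0 < m) {v₁ v₂ : E2} (hv : v₁ ≠ v₂) (v : E2) :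
    v ∈ CA l m v₁ v₂ ↔ (toC v - toC v₂) / (toC v₁ - toC v₂) ∈ halfTurnRegion (l / m) := by
  set w := toC v₁ - toC v₂
  set ξ := (toC v - toC v₂) / w
  have hw : w ≠ 0 := sub_ne_zero.2 (toC.injective.ne hv)
  have hz : toC v - toC v₂ = w * ξ := (mul_div_cancel₀ _ hw).symm
  have hside : ⟪v - v₂, thetaMap (v₁ - v₂)⟫ = Complex.normSq w * ξ.im := by
    rw [inner_thetaMap, map_sub, map_sub, hz, mul_comm w, mul_assoc, Complex.mul_conj]
    simp [mul_comm]
  have htangent (τ : ℝ) :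
      ⟪v - phiA l m τ v₁ v₂, thetaMap (Amap l m (expA l m τ (v₁ - v₂)))⟫
        = Complex.normSq w * m * exp (τ * l) * tangentGap (l / m) ξ (τ * m) := by
    have hpoint : toC v - (Complex.exp (⟨l, m⟩ * τ) * (toC v₁ - toC v₂) + toC v₂)
        = w * ξ - Complex.exp (⟨l, m⟩ * τ) * w := by rw [← hz]; ring
    rw [inner_thetaMap, toC_Amap, toC_expA, phiA, map_sub, map_add, toC_expA, map_sub, hpoint]
    exact im_mul_conj_eq_tangentGap hm.ne' τ w ξ
  have hw2 : 0 < Complex.normSq w := Complex.normSq_pos.2 hw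
  have hfactor (τ : ℝ) : 0 < Complex.normSq w * m * exp (τ * l) := by positivity
  simp only [CA, halfTurnRegion, mem_ofPred_eq]
  rw [hside, mul_nonneg_iff_of_pos_left hw2]
  -- `C_A` is parametrised by `τ ∈ [0, π/m]`, `halfTurnRegion` by `τ m ∈ [0, π]`
  refine and_congr_right fun _ => ⟨fun h τ hτ => ?_, fun h τ hτ => ?_⟩
  · have := h (τ / m) ⟨div_nonneg hτ.1 hm.le, div_le_div_of_nonneg_right hτ.2 hm.le⟩
    rwa [htangent, mul_nonneg_iff_of_pos_left (hfactor _), div_mul_cancel₀ _ hm.ne'] at this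
  · rw [htangent, mul_nonneg_iff_of_pos_left (hfactor _)]
    exact h (τ * m) ⟨mul_nonneg hτ.1 hm.le, (le_div_iff₀ hm).1 hτ.2⟩

end Plane

section System

variable {l m : ℝ} {η : E2} {um up : ℝ}

theorem rho_eq (l m : ℝ) : rho l m = exp (l / m * π) := by
  rw [rho]; ring_nf

theorem rho_lt_one (hl : l < 0) (hm : 0 < m) : rho l m < 1 :=
  exp_lt_one_iff.2 (div_neg_of_neg_of_pos (mul_neg_of_pos_of_neg pi_pos hl) hm)

theorem toC_equil (u : ℝ) : toC (equil l m η u) = ((-u : ℝ) : ℂ) * toC (AinvMap l m η) := by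
  rw [equil, map_smul, Complex.real_smul]

theorem toC_Pplus_sub_equil (hρ : rho l m ≠ 1) :
    toC (Pplus l m η um up) - toC (equil l m η um)
      = ((um - up) / (1 - rho l m) : ℝ) * toC (AinvMap l m η) := by
  have : 1 - rho l m ≠ 0 := sub_ne_zero.2 hρ.symm
  rw [Pplus, map_smul, Complex.real_smul, toC_equil, ← sub_mul, ← Complex.ofReal_sub]
  congr 2
  field_simp
  ring

theorem toC_Pminus_sub_equil (hρ : rho l m ≠ 1) :
    toC (Pminus l m η um up) - toC (equil l m η up)
      = -(toC (Pplus l m η um up) - toC (equil l m η um)) := by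
  have : 1 - rho l m ≠ 0 := sub_ne_zero.2 hρ.symm
  rw [Pminus, map_smul, Complex.real_smul, toC_equil, ← sub_mul, ← Complex.ofReal_sub,
    toC_Pplus_sub_equil hρ, ← neg_mul, ← Complex.ofReal_neg]
  congr 2
  field_simp
  ring

theorem toC_equil_sub_equil (hρ : rho l m ≠ 1) (hu : um ≠ up) (u : ℝ) :
    toC (equil l m η u) - toC (equil l m η um)
      = ((1 - rho l m) * (u - um) / (up - um) : ℝ)
          * (toC (Pplus l m η um up) - toC (equil l m η um)) := by
  have : 1 - rho l m ≠ 0 := sub_ne_zero.2 hρ.symm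
  have : up - um ≠ 0 := sub_ne_zero.2 hu.symm
  rw [toC_Pplus_sub_equil hρ, toC_equil, toC_equil, ← sub_mul, ← mul_assoc,
    ← Complex.ofReal_sub, ← Complex.ofReal_mul]
  congr 2
  field_simp
  ring

theorem toC_Pplus_sub_equil_ne_zero (hm : 0 < m) (hη : η ≠ 0) (hρ : rho l m ≠ 1)
    (hu : um ≠ up) : toC (Pplus l m η um up) - toC (equil l m η um) ≠ 0 := by
  have hA : toC (AinvMap l m η) ≠ 0 := by
    intro h
    apply hη
    rw [← toC.map_eq_zero_iff, ← mul_toC_AinvMap l m (by positivity) η, h, mul_zero]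
  rw [toC_Pplus_sub_equil hρ]
  exact mul_ne_zero (Complex.ofReal_ne_zero.2
    (div_ne_zero (sub_ne_zero.2 hu) (sub_ne_zero.2 hρ.symm))) hA

def normalizedCoord (l m : ℝ) (η : E2) (um up : ℝ) (v : E2) : ℂ :=
  (toC v - toC (equil l m η um)) / (toC (Pplus l m η um up) - toC (equil l m η um))

theorem mem_regionC_iff (hl : l < 0) (hm : 0 < m) (hη : η ≠ 0) (hu : um < up) (v : E2) :
    v ∈ regionC l m η um up ↔ normalizedCoord l m η um up v ∈ spiralRegion (l / m) := by
  have hρ := (rho_lt_one hl hm).ne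
  have hw := toC_Pplus_sub_equil_ne_zero hm hη hρ hu.ne
  have hw' : toC (Pminus l m η um up) - toC (equil l m η up) ≠ 0 := by
    rwa [toC_Pminus_sub_equil hρ, neg_ne_zero]
  have hreflect : (toC v - toC (equil l m η up)) /
      (toC (Pminus l m η um up) - toC (equil l m η up))
        = reflect (l / m) (normalizedCoord l m η um up v) := by
    have hup := toC_equil_sub_equil (η := η) hρ hu.ne up
    rw [mul_div_cancel_right₀ _ (sub_ne_zero.2 hu.ne')] at hup
    rw [reflect, normalizedCoord, toC_Pminus_sub_equil hρ, ← rho_eq]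
    field_simp
    linear_combination hup
  rw [regionC, mem_union, mem_CA_iff hm (fun h => hw (by rw [h, sub_self])) v,
    mem_CA_iff hm (fun h => hw' (by rw [h, sub_self])) v, hreflect]
  rfl

theorem normalizedCoord_phi (hl : l < 0) (hm : 0 < m) (hη : η ≠ 0) (hu : um < up)
    (s : ℝ) (v : E2) (u : ℝ) :
    normalizedCoord l m η um up (phi l m η s v u)
      = spiral (l / m) ((1 - rho l m) * (u - um) / (up - um)) (s * m)
          (normalizedCoord l m η um up v) := by
  have hρ := (rho_lt_one hl hm).ne
  have hw := toC_Pplus_sub_equil_ne_zero hm hη hρ hu.ne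
  have hδ := toC_equil_sub_equil (η := η) hρ hu.ne u
  have hexp : ((l / m : ℝ) + Complex.I) * ((s * m : ℝ) : ℂ) = ⟨l, m⟩ * s := by
    have : (m : ℂ) ≠ 0 := Complex.ofReal_ne_zero.2 hm.ne'
    rw [Complex.mk_eq_add_mul_I]
    push_cast
    field_simp
  rw [normalizedCoord, normalizedCoord, spiral, hexp, phi, map_add, toC_expA, map_sub]
  field_simp
  linear_combination (1 - Complex.exp (⟨l, m⟩ * s)) * hδ

theorem phi_mem_regionC (hl : l < 0) (hm : 0 < m) (hη : η ≠ 0) (hu : um < up) {v : E2}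
    (hv : v ∈ regionC l m η um up) {u : ℝ} (hu' : u ∈ Icc um up) {s : ℝ} (hs : 0 ≤ s) :
    phi l m η s v u ∈ regionC l m η um up := by
  rw [mem_regionC_iff hl hm hη hu] at hv ⊢
  rw [normalizedCoord_phi hl hm hη hu]
  have hρ : 0 < 1 - rho l m := sub_pos.2 (rho_lt_one hl hm)
  have hδ : (1 - rho l m) * (u - um) / (up - um) ∈ Icc 0 (1 - exp (l / m * π)) := by
    rw [← rho_eq]
    constructor
    · exact div_nonneg (mul_nonneg hρ.le (sub_nonneg.2 hu'.1)) (sub_nonneg.2 hu.le)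
    · rw [div_le_iff₀ (sub_pos.2 hu)]
      exact mul_le_mul_of_nonneg_left (by linarith [hu'.2]) hρ.le
  exact spiral_mem_spiralRegion hδ (mul_nonneg hs hm.le) hv

end System

theorem reachPlus_subset_of_forall_phi_mem {l m : ℝ} {η : E2} {Ω : Set ℝ} {D : Set E2}
    (hD : ∀ v ∈ D, ∀ u ∈ Ω, ∀ s, 0 ≤ s → phi l m η s v u ∈ D) {v : E2} (hv : v ∈ D) :
    ReachPlus l m η Ω v ⊆ D := by
  rintro _ ⟨L, hL, rfl⟩
  induction L generalizing v with
  | nil => exact hv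
  | cons p L ih =>
    have hp := hL p List.mem_cons_self
    exact ih (hD v hv p.2 hp.2 p.1 hp.1) fun q hq => hL q (List.mem_cons_of_mem p hq)

end LinearControl

/-- the region `C = C_A(P⁺, v(u⁻)) ∪ C_A(P⁻, v(u⁺))` is positively invariant. -/
theorem stmt8 (l m : ℝ) (hl : l < 0) (hm : 0 < m) (η : E2) (hη : η ≠ 0)
    (um up : ℝ) (hu : um < up) :
    (∀ v ∈ regionC l m η um up,
      ReachPlus l m η (Icc um up) v ⊆ regionC l m η um up) ∧
    ∀ v ∈ regionC l m η um up, ∀ u ∈ Icc um up, ∀ s : ℝ, 0 ≤ s →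
      phi l m η s v u ∈ regionC l m η um up := by
  have step : ∀ v ∈ regionC l m η um up, ∀ u ∈ Icc um up, ∀ s : ℝ, 0 ≤ s →
      phi l m η s v u ∈ regionC l m η um up :=
    fun _ hv _ hu' _ hs => LinearControl.phi_mem_regionC hl hm hη hu hv hu' hs
  exact ⟨fun _ hv => LinearControl.reachPlus_subset_of_forall_phi_mem step hv, step⟩
end
end
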